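/- arXiv:nlin/0012007 — 7 statements merged into one kernel-verified Lean document; each statement's English description precedes it below -/
import Mathlib

section
/- Let (X,d) be a metric space. The shift systems (Σ²(X), σ₂) and (Σ(X), σ) are topologically conjugate if and only if Σ(X) is homeomorphic to X. The 'if' direction: given a homeomorphism α: Σ(X) → X, the map φ: Σ²(X) → Σ(X), φ((ξ_0, ξ_1, ...)) = (α(ξ_0), α(ξ_1), ...), is a homeomorphism satisfying φ ∘ σ₂ = σ ∘ φ. -/
/-- The shift map `σ : Σ(X) → Σ(X)`. -/
def seqShift {X : Type*} (x : ℕ → X) : ℕ → X := fun i => x (i + 1)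

/-- The second order shift map `σ₂ : Σ²(X) → Σ²(X)`. -/
def seqShift2 {X : Type*} (x : ℕ → ℕ → X) : ℕ → ℕ → X := fun k => x (k + 1)

lemma shift_fixed_const {X : Type*} {y : ℕ → X} (h : seqShift y = y) :
    y = fun _ => y 0 := by
  funext n
  induction n with
  | zero => rfl
  | succ n ih => simpa [seqShift, ih] using congrFun h n

/-- `(Σ²(X), σ₂)` and `(Σ(X), σ)` are topologically conjugate iff
`Σ(X)` is homeomorphic to `X`; moreover, in the 'if' direction, given a homeomorphism
`α : Σ(X) → X`, the map `φ(ξ) = (α ξ₀, α ξ₁, …)` is a conjugating homeomorphism. -/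
theorem sigma2_conjugate_sigma_iff {X : Type*} [MetricSpace X] :
    ((∃ φ : (ℕ → ℕ → X) ≃ₜ (ℕ → X), ∀ ξ, φ (seqShift2 ξ) = seqShift (φ ξ)) ↔
      Nonempty ((ℕ → X) ≃ₜ X)) ∧
    ∀ α : (ℕ → X) ≃ₜ X, ∃ φ : (ℕ → ℕ → X) ≃ₜ (ℕ → X),
      (∀ (ξ : ℕ → ℕ → X) (k : ℕ), φ ξ k = α (ξ k)) ∧
      ∀ ξ, φ (seqShift2 ξ) = seqShift (φ ξ) := by
  have key : ∀ α : (ℕ → X) ≃ₜ X, ∃ φ : (ℕ → ℕ → X) ≃ₜ (ℕ → X),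
      (∀ (ξ : ℕ → ℕ → X) (k : ℕ), φ ξ k = α (ξ k)) ∧
      ∀ ξ, φ (seqShift2 ξ) = seqShift (φ ξ) := by
    intro α
    refine ⟨Homeomorph.piCongrRight fun _ => α, ?_, ?_⟩
    · intro ξ k; rfl
    · intro ξ; rfl
  refine ⟨⟨?_, ?_⟩, key⟩
  · rintro ⟨φ, hφ⟩
    -- φ maps constant sequences to constant sequences
    have hsymm : ∀ y, φ.symm (seqShift y) = seqShift2 (φ.symm y) := by
      intro y
      apply φ.injective
      rw [hφ, φ.apply_symm_apply, φ.apply_symm_apply]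
    have hconst : ∀ x : ℕ → X, φ (fun _ => x) = fun _ => φ (fun _ => x) 0 := by
      intro x
      apply shift_fixed_const
      rw [← hφ]; rfl
    have hconst' : ∀ a : X, φ.symm (fun _ => a) = fun _ => φ.symm (fun _ => a) 0 := by
      intro a
      have : seqShift2 (φ.symm (fun _ => a)) = φ.symm (fun _ => a) := by
        rw [← hsymm]; rfl
      funext n
      induction n with
      | zero => rfl
      | succ n ih => simpa [seqShift2, ih] using congrFun this n
    refine ⟨⟨⟨fun x => φ (fun _ => x) 0, fun a => φ.symm (fun _ => a) 0, ?_, ?_⟩, ?_, ?_⟩⟩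
    · intro x
      show φ.symm (fun _ => φ (fun _ => x) 0) 0 = x
      rw [← hconst x, φ.symm_apply_apply]
    · intro a
      show φ (fun _ => φ.symm (fun _ => a) 0) 0 = a
      rw [← hconst' a, φ.apply_symm_apply]
    · exact (continuous_apply 0).comp (φ.continuous.comp (continuous_pi fun _ => continuous_id))
    · exact (continuous_apply 0).comp (φ.symm.continuous.comp (continuous_pi fun _ => continuous_id))
  · rintro ⟨α⟩
    obtain ⟨φ, _, h⟩ := key α
    exact ⟨φ, h⟩
end

section
/- If a topological conjugacy φ: Σ²(X) → Σ(X) between the shifts exists, then X is homeomorphic to Σ(X). In particular, for each x ∈ Σ(X), the constant sequence x̃ = (x, x, ...) is a fixed point of σ₂, its image φ(x̃) is a fixed point of σ, hence φ(x̃) is a constant sequence (x*, x*, ...) with x* ∈ X, and the map α: Σ(X) → X, α(x) = x*, is a homeomorphism. -/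
lemma const_of_fixed {Y : Type*} (f : ℕ → Y) (hf : ∀ i, f (i + 1) = f i) :
    f = fun _ => f 0 := by
  funext i
  induction i with
  | zero => rfl
  | succ n ih => simp only [hf n, ih]

/-- if `φ : Σ²(X) → Σ(X)` is a topological conjugacy between the shifts,
then `X` is homeomorphic to `Σ(X)`.  Indeed, `φ` sends each constant sequence
`x̃ = (x, x, …) ∈ Σ²(X)` (a fixed point of `σ₂`) to a fixed point of `σ`, i.e. a
constant sequence `(x*, x*, …)`, and `α : Σ(X) → X`, `α(x) = x*`, is a homeomorphism. -/
theorem homeomorph_of_sigma2_conjugacy {X : Type*} [MetricSpace X]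
    (φ : (ℕ → ℕ → X) ≃ₜ (ℕ → X)) (hφ : ∀ ξ, φ (seqShift2 ξ) = seqShift (φ ξ)) :
    ∃ α : (ℕ → X) ≃ₜ X, ∀ x : ℕ → X, φ (fun _ => x) = fun _ => α x := by
  -- φ of a constant sequence is constant
  have hconst : ∀ x : ℕ → X, φ (fun _ => x) = fun _ => φ (fun _ => x) 0 := by
    intro x
    refine const_of_fixed (φ fun _ => x) fun i => ?_
    have h := hφ (fun _ => x)
    have h2 : seqShift2 (fun _ => x) = fun _ => x := rfl
    rw [h2] at h
    exact congrFun h.symm i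
  -- φ.symm of a constant sequence is constant
  have hconst' : ∀ a : X, φ.symm (fun _ => a) = fun _ => φ.symm (fun _ => a) 0 := by
    intro a
    refine const_of_fixed (φ.symm fun _ => a) fun i => ?_
    have h := hφ (φ.symm (fun _ => a))
    rw [φ.apply_symm_apply] at h
    have h2 : seqShift (fun _ => a) = (fun _ => a : ℕ → X) := rfl
    rw [h2] at h
    have h3 : seqShift2 (φ.symm (fun _ => a)) = φ.symm (fun _ => a) := by
      have := congrArg φ.symm h
      rwa [φ.symm_apply_apply] at this
    exact congrFun h3 i
  refine ⟨{
    toFun := fun x => φ (fun _ => x) 0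
    invFun := fun a => φ.symm (fun _ => a) 0
    left_inv := by
      intro x
      show φ.symm (fun _ => φ (fun _ => x) 0) 0 = x
      rw [← hconst x, φ.symm_apply_apply]
    right_inv := by
      intro a
      show φ (fun _ => φ.symm (fun _ => a) 0) 0 = a
      rw [← hconst' a, φ.apply_symm_apply]
    continuous_toFun := by
      exact (continuous_apply 0).comp (φ.continuous.comp
        (continuous_pi fun _ => continuous_id))
    continuous_invFun := by
      exact (continuous_apply 0).comp (φ.symm.continuous.comp
        (continuous_pi fun _ => continuous_id))
  }, ?_⟩
  · intro x
    exact hconst x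
end

section
/- For every k ≥ 3 and any metric space (X,d), the k-th order shift system (Σ^k(X), σ_k) is topologically conjugate to the second order shift system (Σ²(X), σ₂). -/
/-- The iterated sequence spaces: `SigmaIt X 0 = X`, `SigmaIt X (k+1) = ℕ → SigmaIt X k`,
so `SigmaIt X k` is the `k`-th order symbol sequence space `Σᵏ(X)`. -/
def SigmaIt (X : Type*) : ℕ → Type _ := fun k => Nat.rec X (fun _ ih => ℕ → ih) k

noncomputable instance sigmaItTop (X : Type*) [t : TopologicalSpace X] :
    ∀ k, TopologicalSpace (SigmaIt X k)
  | 0 => t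
  | (k + 1) =>
      letI := sigmaItTop X k
      (inferInstance : TopologicalSpace (ℕ → SigmaIt X k))

/-- The shift map `σ_{k+1}` on `Σ^{k+1}(X) = ℕ → Σᵏ(X)`. -/
def sigmaItShift {X : Type*} (k : ℕ) (x : SigmaIt X (k + 1)) : SigmaIt X (k + 1) :=
  fun n => x (n + 1)

/-- Currying homeomorphism for Pi types. -/
def curryHomeo (α β Y : Type*) [TopologicalSpace Y] : (α × β → Y) ≃ₜ (α → β → Y) where
  toEquiv := Equiv.curry α β Y
  continuous_toFun := continuous_pi fun a => continuous_pi fun b => continuous_apply (a, b)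
  continuous_invFun := continuous_pi fun p => (continuous_apply p.2).comp (continuous_apply p.1)

/-- `(ℕ → ℕ → Y) ≃ₜ (ℕ → Y)`. -/
noncomputable def squish (Y : Type*) [TopologicalSpace Y] : (ℕ → ℕ → Y) ≃ₜ (ℕ → Y) :=
  (curryHomeo ℕ ℕ Y).symm.trans (Homeomorph.piCongrLeft (Y := fun _ => Y)
    (Denumerable.eqv (ℕ × ℕ)))

/-- `Σ^{k+1}(X) ≃ₜ Σ¹(X)`. -/
noncomputable def collapse (X : Type*) [TopologicalSpace X] :
    ∀ k, SigmaIt X (k + 1) ≃ₜ SigmaIt X 1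
  | 0 => Homeomorph.refl _
  | (k + 1) =>
      (Homeomorph.piCongrRight (fun _ : ℕ => collapse X k)).trans (squish X)

/-- for every `k ≥ 3` (written as `k = m + 3`) and any metric space `X`,
the `k`-th order shift system `(Σᵏ(X), σ_k)` is topologically conjugate to the second
order shift system `(Σ²(X), σ₂)`. -/
theorem sigmaIt_conjugate_two {X : Type*} [MetricSpace X] (m : ℕ) :
    ∃ h : SigmaIt X (m + 3) ≃ₜ SigmaIt X 2,
      ∀ x : SigmaIt X (m + 3),
        h (sigmaItShift (m + 2) x) = sigmaItShift 1 (h x) := by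
  refine ⟨Homeomorph.piCongrRight (Y₁ := fun _ : ℕ => SigmaIt X (m + 2)) (Y₂ := fun _ : ℕ => SigmaIt X 1) (fun _ : ℕ => collapse X (m + 1)), fun x => ?_⟩
  funext n
  rfl
end

section
/- Let X be a topological space, f: X → X, and {A_i, i ∈ I} a finite or countable family of subsets such that f(A_j) ⊇ ⋃_{i∈I} A_i for all j ∈ I. Then for every l ≥ 1 and every choice of indices i_0, i_1, ..., i_l ∈ I, one has f^l(⋂_{s=0}^{l} f^{-s}(A_{i_s})) = A_{i_l}. -/
lemma exists_chain {X : Type*} {ι : Type*} (A : ι → Set X) (f : X → X)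
    (h : ∀ j : ι, (⋃ i : ι, A i) ⊆ f '' (A j)) :
    ∀ l : ℕ, ∀ i : ℕ → ι, ∀ y ∈ A (i l),
      ∃ x, f^[l] x = y ∧ ∀ s ≤ l, f^[s] x ∈ A (i s) := by
  intro l
  induction l with
  | zero =>
    intro i y hy
    exact ⟨y, rfl, fun s hs => by simpa [Nat.le_zero.mp hs] using hy⟩
  | succ l ih =>
    intro i y hy
    obtain ⟨z, hz, hfz⟩ := h (i l) (Set.mem_iUnion.mpr ⟨i (l + 1), hy⟩)
    obtain ⟨x, hx, hxs⟩ := ih i z hz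
    refine ⟨x, ?_, fun s hs => ?_⟩
    · rw [Function.iterate_succ_apply', hx, hfz]
    · rcases Nat.lt_succ_iff_lt_or_eq.mp (Nat.lt_succ_of_le hs) with hlt | rfl
      · exact hxs s (Nat.lt_succ_iff.mp hlt)
      · rw [Function.iterate_succ_apply', hx, hfz]; exact hy

/-- let `{A_i, i ∈ ι}` be a finite or countable family of subsets of a
topological space `X` and `f : X → X` a map with `f(A_j) ⊇ ⋃_i A_i` for all `j`.
Then for every `l ≥ 1` and all indices `i₀, i₁, …`,
`f^l (⋂_{s=0}^{l} f^{-s}(A_{i_s})) = A_{i_l}`. -/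
theorem image_iterate_inter_preimages {X : Type*} [TopologicalSpace X] {ι : Type*}
    [Countable ι] (A : ι → Set X) (f : X → X)
    (h : ∀ j : ι, (⋃ i : ι, A i) ⊆ f '' (A j)) :
    ∀ l : ℕ, 1 ≤ l → ∀ i : ℕ → ι,
      f^[l] '' (⋂ s : ℕ, ⋂ _ : s ≤ l, f^[s] ⁻¹' A (i s)) = A (i l) := by
  intro l _ i
  apply Set.Subset.antisymm
  · rintro _ ⟨x, hx, rfl⟩
    have := Set.mem_iInter.mp hx l
    exact Set.mem_iInter.mp this le_rfl
  · intro y hy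
    obtain ⟨x, hx, hxs⟩ := exists_chain A f h l i y hy
    exact ⟨x, Set.mem_iInter.mpr fun s => Set.mem_iInter.mpr fun hs => hxs s hs, hx⟩
end

section
/- Let X be a Hausdorff space, f: X → X continuous, and suppose (X, f) has a distillation of order N: pairwise disjoint nonempty compact sets A_0,...,A_{N−1} with f(A_i) ⊇ ⋃_{j∈a(i)} A_j (each a(i) ⊆ {0,...,N−1} nonempty and maximal, i.e., f(A_i) ∩ A_j = ∅ for j ∉ a(i)), and card(⋂_{s=0}^∞ f^{-s}(A_{i_s})) ≤ 1 for every sequence (i_s). Let Σ_A ⊆ Σ(N) be the subshift of finite type determined by the transition matrix a_{ij} = 1 iff j ∈ a(i), and Λ = ⋂_{s≥0} f^{-s}(⋃_i A_i). Then the coding map φ: Λ → Σ_A sending x to its itinerary is a homeomorphism with φ ∘ f|_Λ = σ ∘ φ; i.e., (Σ_A, σ) is topologically conjugate to (Λ, f). -/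
/-- if a continuous map `f` on a Hausdorff space `X` has a distillation
of order `N` (pairwise disjoint nonempty compact sets `A₀, …, A_{N-1}` with
`f(A_i) ⊇ ⋃_{j ∈ a(i)} A_j`, each `a(i)` nonempty and maximal, and every itinerary
intersection `⋂_s f^{-s}(A_{i_s})` containing at most one point), then the itinerary
coding `φ : Λ → Σ_A` is a homeomorphism conjugating `f|_Λ` with the subshift of finite
type `(Σ_A, σ)`; here `Λ = ⋂_{s} f^{-s}(⋃_i A_i)`. -/
theorem distillation_partial_conjugate_representation {X : Type*} [TopologicalSpace X]
    [T2Space X] (f : X → X) (hf : Continuous f) (N : ℕ) (A : Fin N → Set X)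
    (hcpt : ∀ i, IsCompact (A i)) (hne : ∀ i, (A i).Nonempty)
    (hdisj : ∀ i j, i ≠ j → Disjoint (A i) (A j))
    (a : Fin N → Set (Fin N)) (hane : ∀ i, (a i).Nonempty)
    (hcover : ∀ i, ∀ j ∈ a i, A j ⊆ f '' A i)
    (hmax : ∀ i j, j ∉ a i → (f '' A i) ∩ A j = ∅)
    (hcard : ∀ i : ℕ → Fin N, Set.Subsingleton (⋂ s : ℕ, f^[s] ⁻¹' A (i s))) :
    ∃ φ : (⋂ s : ℕ, f^[s] ⁻¹' (⋃ i, A i) : Set X) ≃ₜ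
        ({s : ℕ → Fin N | ∀ k, s (k + 1) ∈ a (s k)} : Set (ℕ → Fin N)),
      (∀ x : (⋂ s : ℕ, f^[s] ⁻¹' (⋃ i, A i) : Set X), ∀ k : ℕ,
        f^[k] x.1 ∈ A ((φ x).1 k)) ∧
      (∀ x : (⋂ s : ℕ, f^[s] ⁻¹' (⋃ i, A i) : Set X),
        ∀ h : f x.1 ∈ (⋂ s : ℕ, f^[s] ⁻¹' (⋃ i, A i) : Set X),
          (φ ⟨f x.1, h⟩).1 = fun n => (φ x).1 (n + 1)) := by
  classical
  set Λ : Set X := ⋂ s : ℕ, f^[s] ⁻¹' (⋃ i, A i) with hΛdef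
  set S : Set (ℕ → Fin N) := {s : ℕ → Fin N | ∀ k, s (k + 1) ∈ a (s k)} with hSdef
  have hclosed : ∀ i, IsClosed (A i) := fun i => (hcpt i).isClosed
  have huniq : ∀ {y : X} {i j : Fin N}, y ∈ A i → y ∈ A j → i = j := by
    intro y i j hi hj
    by_contra h
    exact (hdisj i j h).le_bot ⟨hi, hj⟩
  have hmemU : ∀ x : Λ, ∀ s : ℕ, ∃ i, f^[s] x.1 ∈ A i := by
    intro x s
    have := Set.mem_iInter.1 x.2 s
    simpa using this
  choose idx hidx using hmemU
  -- admissibility of itineraries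
  have hadm : ∀ x : Λ, ∀ k : ℕ, idx x (k + 1) ∈ a (idx x k) := by
    intro x k
    by_contra h
    have h1 : f^[k + 1] x.1 ∈ f '' A (idx x k) := by
      rw [Function.iterate_succ_apply']
      exact Set.mem_image_of_mem f (hidx x k)
    have h2 : f^[k + 1] x.1 ∈ A (idx x (k + 1)) := hidx x (k + 1)
    have := hmax (idx x k) (idx x (k + 1)) h
    exact absurd (Set.mem_inter h1 h2) (by rw [this]; exact Set.notMem_empty _)
  -- the coding map
  set g : Λ → S := fun x => ⟨fun k => idx x k, fun k => hadm x k⟩ with hgdef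
  -- injectivity
  have hginj : Function.Injective g := by
    intro x y hxy
    have hfun : ∀ k, idx x k = idx y k := fun k => congrFun (congrArg Subtype.val hxy) k
    have hx : x.1 ∈ ⋂ s : ℕ, f^[s] ⁻¹' A (idx x s) :=
      Set.mem_iInter.2 fun s => hidx x s
    have hy : y.1 ∈ ⋂ s : ℕ, f^[s] ⁻¹' A (idx x s) := by
      refine Set.mem_iInter.2 fun s => ?_
      rw [hfun s]; exact hidx y s
    exact Subtype.ext (hcard (fun k => idx x k) hx hy)
  -- partial orbits exist for admissible sequences
  have hpartial : ∀ n : ℕ, ∀ j : ℕ → Fin N, (∀ k, j (k + 1) ∈ a (j k)) →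
      ∃ x, ∀ s ≤ n, f^[s] x ∈ A (j s) := by
    intro n
    induction n with
    | zero =>
      intro j _
      obtain ⟨x, hx⟩ := hne (j 0)
      exact ⟨x, fun s hs => by simpa [Nat.le_zero.1 hs] using hx⟩
    | succ n ih =>
      intro j hj
      obtain ⟨y, hy⟩ := ih (fun k => j (k + 1)) (fun k => hj (k + 1))
      have hy1 : y ∈ A (j 1) := by simpa using hy 0 (Nat.zero_le n)
      obtain ⟨x, hx, hfx⟩ := hcover (j 0) (j 1) (hj 0) hy1
      refine ⟨x, fun s hs => ?_⟩
      cases s with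
      | zero => simpa using hx
      | succ t =>
        rw [Function.iterate_succ_apply, hfx]
        exact hy t (Nat.lt_succ_iff.1 hs)
  -- surjectivity
  have hgsurj : Function.Surjective g := by
    rintro ⟨j, hj⟩
    -- nested compact sets
    set K : ℕ → Set X := fun n => ⋂ s ∈ Set.Iic n, f^[s] ⁻¹' A (j s) with hKdef
    have hKclosed : ∀ n, IsClosed (K n) := by
      intro n
      exact isClosed_biInter fun s _ => (hclosed (j s)).preimage (hf.iterate s)
    have hKsub : ∀ n, K n ⊆ A (j 0) := by
      intro n x hx
      have := Set.mem_iInter₂.1 hx 0 (Nat.zero_le n)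
      simpa using this
    have hKcpt : ∀ n, IsCompact (K n) :=
      fun n => (hcpt (j 0)).of_isClosed_subset (hKclosed n) (hKsub n)
    have hKmono : ∀ n, K (n + 1) ⊆ K n := by
      intro n x hx
      exact Set.mem_iInter₂.2 fun s hs =>
        Set.mem_iInter₂.1 hx s (le_trans hs (Nat.le_succ n))
    have hKne : ∀ n, (K n).Nonempty := by
      intro n
      obtain ⟨x, hx⟩ := hpartial n j hj
      exact ⟨x, Set.mem_iInter₂.2 fun s hs => hx s hs⟩
    have hne' : (⋂ n, K n).Nonempty :=
      IsCompact.nonempty_iInter_of_sequence_nonempty_isCompact_isClosed K hKmono hKne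
        (hKcpt 0) hKclosed
    obtain ⟨x, hx⟩ := hne'
    have hxall : ∀ s : ℕ, f^[s] x ∈ A (j s) := by
      intro s
      have := Set.mem_iInter.1 hx s
      exact Set.mem_iInter₂.1 this s (Set.mem_Iic.2 le_rfl)
    have hxΛ : x ∈ Λ := Set.mem_iInter.2 fun s =>
      Set.mem_iUnion.2 ⟨j s, hxall s⟩
    refine ⟨⟨x, hxΛ⟩, ?_⟩
    apply Subtype.ext
    funext k
    exact huniq (hidx ⟨x, hxΛ⟩ k) (hxall k)
  -- Λ is compact
  have hΛclosed : IsClosed Λ :=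
    isClosed_iInter fun s =>
      (isClosed_iUnion_of_finite fun i => hclosed i).preimage (hf.iterate s)
  have hΛsub : Λ ⊆ ⋃ i, A i := by
    intro x hx
    have := Set.mem_iInter.1 hx 0
    simpa using this
  have hΛcpt : IsCompact Λ :=
    ((isCompact_iUnion fun i => hcpt i)).of_isClosed_subset hΛclosed hΛsub
  haveI : CompactSpace Λ := isCompact_iff_compactSpace.1 hΛcpt
  -- continuity of g
  have hgcont : Continuous g := by
    apply Continuous.subtype_mk
    apply continuous_pi
    intro k
    have : Continuous fun x : Λ => idx x k := by
      rw [continuous_discrete_rng]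
      intro b
      have heq : ((fun x : Λ => idx x k) ⁻¹' {b}) =
          Subtype.val ⁻¹' (⋃ j ∈ ({b}ᶜ : Set (Fin N)), f^[k] ⁻¹' A j)ᶜ := by
        ext x
        simp only [Set.mem_preimage, Set.mem_singleton_iff, Set.mem_compl_iff,
          Set.mem_iUnion, not_exists]
        constructor
        · rintro rfl j hj hmem
          exact hj (huniq hmem (hidx x k))
        · intro h
          by_contra hb
          exact h (idx x k) hb (hidx x k)
      rw [heq]
      refine IsOpen.preimage continuous_subtype_val ?_
      refine isOpen_compl_iff.2 ?_
      exact Set.Finite.isClosed_biUnion (Set.toFinite _)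
        fun j _ => (hclosed j).preimage (hf.iterate k)
    exact this
  -- assemble the homeomorphism
  let e : Λ ≃ S := Equiv.ofBijective g ⟨hginj, hgsurj⟩
  have hecont : Continuous e := hgcont
  let φ : Λ ≃ₜ S := hecont.homeoOfEquivCompactToT2
  refine ⟨φ, ?_, ?_⟩
  · intro x k
    show f^[k] x.1 ∈ A (idx x k)
    exact hidx x k
  · intro x h
    show (fun k => idx (⟨f x.1, h⟩ : Λ) k) = fun n => idx x (n + 1)
    funext n
    have h1 : f^[n] (f x.1) ∈ A (idx ⟨f x.1, h⟩ n) := hidx ⟨f x.1, h⟩ n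
    have h2 : f^[n] (f x.1) ∈ A (idx x (n + 1)) := by
      rw [← Function.iterate_succ_apply]
      exact hidx x (n + 1)
    exact huniq h1 h2
end

section
/- Let X be a Hausdorff space, f: X → X continuous, and {A_0,...,A_{N−1}} a quasi-distillation of order N: pairwise disjoint nonempty compact sets with f(A_i) ⊇ ⋃_{j∈a(i)} A_j, each a(i) nonempty and maximal. Then for every sequence (i_0 i_1 ...) in the associated transition subshift Σ_A, the set ⋂_{s=0}^∞ f^{-s}(A_{i_s}) is nonempty, and the itinerary coding φ: Λ → Σ_A (where Λ = ⋂_{s≥0} f^{-s}(⋃_i A_i)) is a continuous surjection satisfying φ ∘ f|_Λ = σ ∘ φ. -/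
/-- if a continuous map `f` on a Hausdorff space `X` has a
quasi-distillation of order `N` (pairwise disjoint nonempty compact sets `A₀, …,
A_{N-1}` with `f(A_i) ⊇ ⋃_{j ∈ a(i)} A_j`, each `a(i)` nonempty and maximal), then for
every sequence in the transition subshift `Σ_A` the set `⋂_s f^{-s}(A_{i_s})` is
nonempty, and the itinerary coding `φ : Λ → Σ_A` (`Λ = ⋂_s f^{-s}(⋃_i A_i)`) is a
continuous surjection with `φ ∘ f|_Λ = σ ∘ φ`. -/
theorem quasi_distillation_partial_quasi_representation {X : Type*} [TopologicalSpace X]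
    [T2Space X] (f : X → X) (hf : Continuous f) (N : ℕ) (A : Fin N → Set X)
    (hcpt : ∀ i, IsCompact (A i)) (hne : ∀ i, (A i).Nonempty)
    (hdisj : ∀ i j, i ≠ j → Disjoint (A i) (A j))
    (a : Fin N → Set (Fin N)) (hane : ∀ i, (a i).Nonempty)
    (hcover : ∀ i, ∀ j ∈ a i, A j ⊆ f '' A i)
    (hmax : ∀ i j, j ∉ a i → (f '' A i) ∩ A j = ∅) :
    (∀ i : ℕ → Fin N, (∀ k, i (k + 1) ∈ a (i k)) →
      (⋂ s : ℕ, f^[s] ⁻¹' A (i s)).Nonempty) ∧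
    ∃ φ : (⋂ s : ℕ, f^[s] ⁻¹' (⋃ i, A i) : Set X) →
        ({s : ℕ → Fin N | ∀ k, s (k + 1) ∈ a (s k)} : Set (ℕ → Fin N)),
      Continuous φ ∧ Function.Surjective φ ∧
      (∀ x : (⋂ s : ℕ, f^[s] ⁻¹' (⋃ i, A i) : Set X), ∀ k : ℕ,
        f^[k] x.1 ∈ A ((φ x).1 k)) ∧
      (∀ x : (⋂ s : ℕ, f^[s] ⁻¹' (⋃ i, A i) : Set X),
        ∀ h : f x.1 ∈ (⋂ s : ℕ, f^[s] ⁻¹' (⋃ i, A i) : Set X),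
          (φ ⟨f x.1, h⟩).1 = fun n => (φ x).1 (n + 1)) := by
  classical
  have closedA : ∀ i, IsClosed (A i) := fun i => (hcpt i).isClosed
  have hcont : ∀ s : ℕ, Continuous (f^[s]) := fun s => hf.iterate s
  have huniq : ∀ (y : X) (i j : Fin N), y ∈ A i → y ∈ A j → i = j := by
    intro y i j hi hj
    by_contra h
    exact Set.disjoint_left.mp (hdisj i j h) hi hj
  -- Part 1
  have part1 : ∀ i : ℕ → Fin N, (∀ k, i (k + 1) ∈ a (i k)) →
      (⋂ s : ℕ, f^[s] ⁻¹' A (i s)).Nonempty := by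
    intro i hi
    set K : ℕ → Set X := fun l => ⋂ s ∈ Finset.range (l + 1), f^[s] ⁻¹' A (i s) with hK
    have hKmem : ∀ l x, x ∈ K l ↔ ∀ s ≤ l, f^[s] x ∈ A (i s) := by
      intro l x
      simp [hK, Nat.lt_succ_iff]
    have hKeq : (⋂ s : ℕ, f^[s] ⁻¹' A (i s)) = ⋂ l, K l := by
      ext x
      simp only [Set.mem_iInter, Set.mem_preimage]
      constructor
      · intro h l
        exact (hKmem l x).mpr fun s _ => h s
      · intro h s
        exact (hKmem s x).mp (h s) s le_rfl
    have hKclosed : ∀ l, IsClosed (K l) := fun l =>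
      isClosed_biInter fun s _ => (closedA (i s)).preimage (hcont s)
    have hKne : ∀ l, ∀ y ∈ A (i l), ∃ x ∈ K l, f^[l] x = y := by
      intro l
      induction l with
      | zero =>
        intro y hy
        exact ⟨y, (hKmem 0 y).mpr (by intro s hs; interval_cases s; simpa using hy), rfl⟩
      | succ l ih =>
        intro y hy
        obtain ⟨z, hz, hzy⟩ := hcover (i l) (i (l + 1)) (hi l) hy
        obtain ⟨x, hx, hxz⟩ := ih z hz
        have hx' := (hKmem l x).mp hx
        refine ⟨x, (hKmem (l + 1) x).mpr ?_, ?_⟩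
        · intro s hs
          rcases Nat.le_succ_iff_eq_or_le.mp hs with h | h
          · subst h
            simpa [Function.iterate_succ_apply', hxz, hzy] using hy
          · exact hx' s h
        · simp [Function.iterate_succ_apply', hxz, hzy]
      -- end induction
    have hKsub : ∀ l, K l ⊆ A (i 0) := fun l x hx => by
      simpa using (hKmem l x).mp hx 0 (Nat.zero_le l)
    rw [hKeq]
    refine IsCompact.nonempty_iInter_of_sequence_nonempty_isCompact_isClosed K
      (fun l x hx => (hKmem l x).mpr fun s hs =>
        (hKmem (l + 1) x).mp hx s (hs.trans (Nat.le_succ l)))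
      (fun l => ?_)
      ((hcpt (i 0)).of_isClosed_subset (hKclosed 0) (hKsub 0)) hKclosed
    obtain ⟨y, hy⟩ := hne (i l)
    obtain ⟨x, hx, -⟩ := hKne l y hy
    exact ⟨x, hx⟩
  refine ⟨part1, ?_⟩
  -- the itinerary map
  have hmemU : ∀ (x : (⋂ s : ℕ, f^[s] ⁻¹' (⋃ i, A i) : Set X)) (k : ℕ),
      ∃ j, f^[k] x.1 ∈ A j := by
    intro x k
    have := Set.mem_iInter.mp x.2 k
    exact Set.mem_iUnion.mp this
  set ψ : (⋂ s : ℕ, f^[s] ⁻¹' (⋃ i, A i) : Set X) → ℕ → Fin N :=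
    fun x k => (hmemU x k).choose with hψ
  have hψmem : ∀ x k, f^[k] x.1 ∈ A (ψ x k) := fun x k => (hmemU x k).choose_spec
  have hψuniq : ∀ x k j, f^[k] x.1 ∈ A j → ψ x k = j := fun x k j hj =>
    huniq _ _ _ (hψmem x k) hj
  have hψadm : ∀ x k, ψ x (k + 1) ∈ a (ψ x k) := by
    intro x k
    by_contra hna
    have h1 : f^[k + 1] x.1 ∈ f '' A (ψ x k) := by
      rw [Function.iterate_succ_apply']
      exact ⟨f^[k] x.1, hψmem x k, rfl⟩
    have h2 := hψmem x (k + 1)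
    have := hmax (ψ x k) (ψ x (k + 1)) hna
    exact absurd (Set.mem_inter h1 h2) (by rw [this]; exact Set.notMem_empty _)
  refine ⟨fun x => ⟨ψ x, hψadm x⟩, ?_, ?_, fun x k => hψmem x k, ?_⟩
  · -- continuity
    refine Continuous.subtype_mk (continuous_pi fun k => ?_) _
    rw [continuous_discrete_rng]
    intro j
    have heq : (fun x => ψ x k) ⁻¹' {j}
        = (Subtype.val ⁻¹' (f^[k] ⁻¹' (A j)) :
            Set (⋂ s : ℕ, f^[s] ⁻¹' (⋃ i, A i) : Set X)) := by
      ext x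
      simp only [Set.mem_preimage, Set.mem_singleton_iff]
      constructor
      · rintro rfl; exact hψmem x k
      · intro hx; exact hψuniq x k j hx
    rw [heq]
    have hcompl : (Subtype.val ⁻¹' (f^[k] ⁻¹' (A j)) :
        Set (⋂ s : ℕ, f^[s] ⁻¹' (⋃ i, A i) : Set X))
        = (⋃ j' ∈ ({j' : Fin N | j' ≠ j}), Subtype.val ⁻¹' (f^[k] ⁻¹' (A j')))ᶜ := by
      ext x
      simp only [Set.mem_preimage, Set.mem_compl_iff, Set.mem_iUnion, Set.mem_setOf_eq,
        not_exists]
      constructor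
      · intro hx j' hj' hx'
        exact hj' (huniq _ _ _ hx' hx)
      · intro h
        have := hψmem x k
        by_contra hx
        exact h (ψ x k) (fun he => hx (he ▸ this)) this
    rw [hcompl]
    refine (Set.Finite.isClosed_biUnion (Set.toFinite _) fun j' _ =>
      ((closedA j').preimage (hcont k)).preimage continuous_subtype_val).isOpen_compl
  · -- surjectivity
    intro ⟨s, hs⟩
    obtain ⟨x, hx⟩ := part1 s hs
    have hx' : ∀ k, f^[k] x ∈ A (s k) := fun k => Set.mem_iInter.mp hx k
    have hxΛ : x ∈ (⋂ s : ℕ, f^[s] ⁻¹' (⋃ i, A i) : Set X) :=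
      Set.mem_iInter.mpr fun k => Set.mem_iUnion.mpr ⟨s k, hx' k⟩
    exact ⟨⟨x, hxΛ⟩, Subtype.ext (funext fun k => hψuniq ⟨x, hxΛ⟩ k (s k) (hx' k))⟩
  · -- shift equivariance
    intro x h
    funext n
    refine hψuniq ⟨f x.1, h⟩ n (ψ x (n + 1)) ?_
    have := hψmem x (n + 1)
    rwa [Function.iterate_succ_apply] at this
end

section
/- Let f: X → X be a piecewise continuous map with partition P_0,...,P_{N−1} and let φ: X → Σ(N) be the itinerary coding φ(x) = (i_0 i_1 ...) where f^k(x) ∈ P_{i_k}. Equip the graph G = {(x, φ(x)) : x ∈ X} with the metric d_G((x,φ(x)),(y,φ(y))) = max{d(x,y), ρ(φ(x),φ(y))}. Then the extension map f_G: G → G, f_G(x, φ(x)) = (f(x), φ(f(x))), is continuous. -/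
/-- let `f` be a piecewise continuous self-map of `X ⊆ ℝⁿ` with partition
`P₀, …, P_{N-1}` and itinerary coding `φ(x) = (i₀ i₁ …)` where `f^k(x) ∈ P_{i_k}`.
Equip the graph `G = {(x, φ(x)) : x ∈ X}` with the max metric (i.e. the product
topology on `ℝⁿ × Σ(N)`, the latter with its sequence metric, equivalently the product
topology of the discrete alphabet).  Then the extension map
`f_G(x, φ(x)) = (f(x), φ(f(x)))` maps `G` into `G` and is continuous on `G`. -/
theorem graph_extension_continuous {n N : ℕ} (X : Set (Fin n → ℝ))
    (f : (Fin n → ℝ) → (Fin n → ℝ)) (hfX : Set.MapsTo f X X)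
    (P : Fin N → Set (Fin n → ℝ))
    (hdisj : ∀ i j, i ≠ j → Disjoint (P i) (P j))
    (hcover : (⋃ i, P i) = X)
    (hcont : ∀ i, ContinuousOn f (P i))
    (φ : (Fin n → ℝ) → ℕ → Fin N)
    (hitin : ∀ x ∈ X, ∀ k : ℕ, f^[k] x ∈ P (φ x k)) :
    Set.MapsTo (fun p : (Fin n → ℝ) × (ℕ → Fin N) => (f p.1, φ (f p.1)))
      {p : (Fin n → ℝ) × (ℕ → Fin N) | p.1 ∈ X ∧ p.2 = φ p.1}
      {p : (Fin n → ℝ) × (ℕ → Fin N) | p.1 ∈ X ∧ p.2 = φ p.1} ∧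
    ContinuousOn (fun p : (Fin n → ℝ) × (ℕ → Fin N) => (f p.1, φ (f p.1)))
      {p : (Fin n → ℝ) × (ℕ → Fin N) | p.1 ∈ X ∧ p.2 = φ p.1} := by
  set S : Set ((Fin n → ℝ) × (ℕ → Fin N)) :=
    {p : (Fin n → ℝ) × (ℕ → Fin N) | p.1 ∈ X ∧ p.2 = φ p.1} with hS
  -- uniqueness of the symbol
  have hP : ∀ x ∈ X, ∀ k : ℕ, ∀ i, f^[k] x ∈ P i → φ x k = i := by
    intro x hx k i hi
    by_contra h
    exact Set.disjoint_left.mp (hdisj _ _ h) (hitin x hx k) hi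
  -- the shift relation
  have hshift : ∀ x ∈ X, φ (f x) = fun k => φ x (k + 1) := by
    intro x hx
    funext k
    apply hP (f x) (hfX hx) k
    rw [← Function.iterate_succ_apply]
    exact hitin x hx (k + 1)
  constructor
  · intro p hp
    exact ⟨hfX hp.1, rfl⟩
  · -- the map agrees on S with g p = (f p.1, fun k => p.2 (k+1))
    have heq : Set.EqOn (fun p : (Fin n → ℝ) × (ℕ → Fin N) => (f p.1, φ (f p.1)))
        (fun p : (Fin n → ℝ) × (ℕ → Fin N) => (f p.1, fun k => p.2 (k + 1))) S := by
      intro p hp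
      have := hshift p.1 hp.1
      have h2 : φ (f p.1) = fun k => p.2 (k + 1) := by rw [this, hp.2]
      exact Prod.ext rfl h2
    refine ContinuousOn.congr ?_ heq
    refine ContinuousOn.prodMk ?_ ?_
    · -- first component: f ∘ fst continuous on S
      intro p hp
      set i := p.2 0 with hi
      have hU : IsOpen {q : (Fin n → ℝ) × (ℕ → Fin N) | q.2 0 = i} := by
        have : {q : (Fin n → ℝ) × (ℕ → Fin N) | q.2 0 = i}
            = (fun q : (Fin n → ℝ) × (ℕ → Fin N) => q.2 0) ⁻¹' {i} := rfl
        rw [this]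
        exact ((continuous_apply 0).comp continuous_snd).isOpen_preimage _
          (isOpen_discrete _)
      have hsub : S ∩ {q : (Fin n → ℝ) × (ℕ → Fin N) | q.2 0 = i}
          ⊆ Prod.fst ⁻¹' (P i) := by
        rintro q ⟨⟨hqX, hqφ⟩, hq0⟩
        have h0 : φ q.1 0 = i := by rw [← hq0, hqφ]
        have := hitin q.1 hqX 0
        simpa [h0] using this
      have hcomp : ContinuousOn (fun q : (Fin n → ℝ) × (ℕ → Fin N) => f q.1)
          (Prod.fst ⁻¹' (P i)) :=
        (hcont i).comp continuous_fst.continuousOn (Set.mapsTo_preimage _ _)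
      have hpU : p ∈ {q : (Fin n → ℝ) × (ℕ → Fin N) | q.2 0 = i} := rfl
      have h1 : ContinuousWithinAt (fun q : (Fin n → ℝ) × (ℕ → Fin N) => f q.1)
          (S ∩ {q : (Fin n → ℝ) × (ℕ → Fin N) | q.2 0 = i}) p :=
        (hcomp.mono hsub) p ⟨hp, hpU⟩
      exact h1.mono_of_mem_nhdsWithin (inter_mem_nhdsWithin S (hU.mem_nhds hpU))
    · exact (continuous_pi fun k =>
        (continuous_apply (k + 1)).comp continuous_snd).continuousOn
end
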